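/- Let A be an n×n real matrix and B an n×m real matrix, and suppose x = ∫_{t₀}^{t} e^{A(t−τ)} B u(τ) dτ for some continuous u : [t₀,t] → ℝ^m. Then x ∈ ⟨A|B⟩ = Σ_{i=0}^{n-1} A^i (range B). -/

import Mathlib

/-! Every value of the integrand lies in `ctrlSub A B`: `exp (s • A)` lies in the subalgebra
generated by `A`, which is finite-dimensional and hence closed, and by Cayley–Hamilton every
polynomial in `A` agrees at `A` with one of degree `< n`. A complete subspace contains the
integral of any function with values in it. -/

/-- The controllable subspace `⟨A|B⟩ = Σ_{i=0}^{n-1} A^i (range B)`. -/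
def ctrlSub {n m : ℕ} (A : Matrix (Fin n) (Fin n) ℝ) (B : Matrix (Fin n) (Fin m) ℝ) :
    Submodule ℝ (Fin n → ℝ) :=
  ⨆ i : Fin n, Submodule.map ((A ^ (i : ℕ)).mulVecLin) (LinearMap.range B.mulVecLin)

open Polynomial

theorem Submodule.intervalIntegral_mem {E : Type*} [NormedAddCommGroup E] [NormedSpace ℝ E]
    [CompleteSpace E] (K : Submodule ℝ E) [CompleteSpace K] {μ : MeasureTheory.Measure ℝ}
    {a b : ℝ} {f : ℝ → E} (hf : ∀ x, f x ∈ K) : ∫ x in a..b, f x ∂μ ∈ K := by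
  have h := K.subtypeₗᵢ.intervalIntegral_comp_comm (a := a) (b := b) (μ := μ)
    fun x => (⟨f x, hf x⟩ : K)
  rw [Submodule.coe_subtypeₗᵢ] at h
  exact h ▸ Submodule.coe_mem _

theorem NormedSpace.exp_mem_adjoin_singleton {𝔸 : Type*} [Ring 𝔸] [Algebra ℚ 𝔸] [Algebra ℝ 𝔸]
    [TopologicalSpace 𝔸] [IsTopologicalRing 𝔸] [T2Space 𝔸] [ContinuousSMul ℝ 𝔸]
    [FiniteDimensional ℝ 𝔸] (x : 𝔸) : NormedSpace.exp x ∈ Algebra.adjoin ℝ {x} :=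
  NormedSpace.exp_mem (R := ℝ) (s := Algebra.adjoin ℝ {x})
    (Submodule.closed_of_finiteDimensional (Subalgebra.toSubmodule (Algebra.adjoin ℝ {x})))
    (Algebra.self_mem_adjoin_singleton ℝ x)

section ctrlSub

variable {n m : ℕ} (A : Matrix (Fin n) (Fin n) ℝ) (B : Matrix (Fin n) (Fin m) ℝ)
  {w : Fin n → ℝ}

theorem aeval_mulVec_mem_ctrlSub_of_degree_lt {p : ℝ[X]} (hp : p.degree < n)
    (hw : w ∈ LinearMap.range B.mulVecLin) : (aeval A p).mulVec w ∈ ctrlSub A B := by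
  rw [aeval_eq_sum_range, Matrix.sum_mulVec]
  refine Submodule.sum_mem _ fun i _ => ?_
  by_cases hi : i < n
  · rw [Matrix.smul_mulVec]
    exact Submodule.smul_mem _ _ <| le_iSup (fun i : Fin n =>
      Submodule.map ((A ^ (i : ℕ)).mulVecLin) (LinearMap.range B.mulVecLin)) ⟨i, hi⟩ ⟨w, hw, rfl⟩
  · rw [coeff_eq_zero_of_degree_lt (hp.trans_le (by exact_mod_cast not_lt.1 hi)), zero_smul,
      Matrix.zero_mulVec]
    exact Submodule.zero_mem _

theorem aeval_mulVec_mem_ctrlSub (p : ℝ[X]) (hw : w ∈ LinearMap.range B.mulVecLin) :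
    (aeval A p).mulVec w ∈ ctrlSub A B := by
  rw [← aeval_modByMonic_eq_self_of_root A.aeval_self_charpoly]
  refine aeval_mulVec_mem_ctrlSub_of_degree_lt A B ?_ hw
  simpa [Matrix.charpoly_degree_eq_dim] using degree_modByMonic_lt p A.charpoly_monic

theorem mulVec_mem_ctrlSub_of_mem_adjoin {M : Matrix (Fin n) (Fin n) ℝ}
    (hM : M ∈ Algebra.adjoin ℝ {A}) (hw : w ∈ LinearMap.range B.mulVecLin) :
    M.mulVec w ∈ ctrlSub A B := by
  rw [Algebra.adjoin_singleton_eq_range_aeval] at hM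
  obtain ⟨p, rfl⟩ := hM
  exact aeval_mulVec_mem_ctrlSub A B p hw

theorem exp_smul_mulVec_mem_ctrlSub (s : ℝ) (hw : w ∈ LinearMap.range B.mulVecLin) :
    (NormedSpace.exp (s • A)).mulVec w ∈ ctrlSub A B := by
  refine mulVec_mem_ctrlSub_of_mem_adjoin A B ?_ hw
  refine Algebra.adjoin_le ?_ (NormedSpace.exp_mem_adjoin_singleton (s • A))
  exact Set.singleton_subset_iff.2 <|
    Subalgebra.smul_mem _ (Algebra.self_mem_adjoin_singleton ℝ A) s

end ctrlSub

theorem integral_mem_ctrlSub_general {n m : ℕ} (A : Matrix (Fin n) (Fin n) ℝ)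
    (B : Matrix (Fin n) (Fin m) ℝ) (t₀ t : ℝ)
    (u : ℝ → Fin m → ℝ) (x : Fin n → ℝ)
    (hx : x = ∫ τ in t₀..t, (NormedSpace.exp ((t - τ) • A)).mulVec (B.mulVec (u τ))) :
    x ∈ ctrlSub A B :=
  hx ▸ (ctrlSub A B).intervalIntegral_mem fun τ =>
    exp_smul_mulVec_mem_ctrlSub A B (t - τ) ⟨u τ, rfl⟩

/-- Any state of the form `x = ∫_{t₀}^{t} e^{A(t−τ)} B u(τ) dτ` with `u` continuous lies in
the controllable subspace `⟨A|B⟩`. -/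
theorem integral_mem_ctrlSub {n m : ℕ} (A : Matrix (Fin n) (Fin n) ℝ)
    (B : Matrix (Fin n) (Fin m) ℝ) (t₀ t : ℝ) (ht : t₀ ≤ t)
    (u : ℝ → Fin m → ℝ) (hu : ContinuousOn u (Set.Icc t₀ t)) (x : Fin n → ℝ)
    (hx : x = ∫ τ in t₀..t, (NormedSpace.exp ((t - τ) • A)).mulVec (B.mulVec (u τ))) :
    x ∈ ctrlSub A B :=
  integral_mem_ctrlSub_general A B t₀ t u x hx
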